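/- Privacy profile of the one-dimensional Gaussian mechanism: for σ > 0 and shift Δ > 0, letting θ = Δ/σ, for all ε ≥ 0 one has D_{e^ε}(N(0,σ²) ‖ N(Δ,σ²)) = Φ(θ/2 − ε/θ) − e^ε Φ(−θ/2 − ε/θ), where Φ is the standard normal CDF. -/

import Mathlib

/-!
The log-likelihood ratio of `N(0, σ²)` against `N(Δ, σ²)` is affine in `z` and decreasing when
`Δ > 0`, so `p - e^ε q` is nonnegative exactly on the half-line `z ≤ c` with
`c = Δ/2 - σ²ε/Δ`. The integral of its positive part is therefore
`P(N(0,σ²) ≤ c) - e^ε P(N(Δ,σ²) ≤ c)`, and standardising both tails gives the two values of `Φ`.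
-/

open Real

/-- Standard normal CDF `Φ(t) = (2π)^{-1/2} ∫_{-∞}^t e^{-r²/2} dr`. -/
noncomputable def stdNormalCDF (t : ℝ) : ℝ :=
  (Real.sqrt (2 * π))⁻¹ * ∫ r in Set.Iic t, exp (-r ^ 2 / 2)

open Set MeasureTheory

theorem integral_comp_mul_add_Iic {E : Type*} [NormedAddCommGroup E] [NormedSpace ℝ E]
    (g : ℝ → E) (t : ℝ) {a : ℝ} (ha : 0 < a) (b : ℝ) :
    ∫ x in Iic t, g (a * x + b) = a⁻¹ • ∫ x in Iic (a * t + b), g x := by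
  have hpre : (fun x => a * x + b) ⁻¹' Iic (a * t + b) = Iic t := by
    ext x
    simp only [mem_preimage, mem_Iic, add_le_add_iff_right, mul_le_mul_iff_right₀ ha]
  calc ∫ x in Iic t, g (a * x + b)
      = ∫ x, (Iic (a * t + b)).indicator g (a * x + b) := by
        rw [← integral_indicator measurableSet_Iic, ← hpre]
        exact congrArg _ (funext fun x => (indicator_comp_right (fun x => a * x + b)).symm)
    _ = a⁻¹ • ∫ y, (Iic (a * t + b)).indicator g (y + b) := by
        rw [Measure.integral_comp_mul_left (fun y => (Iic (a * t + b)).indicator g (y + b)) a,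
          abs_of_pos (inv_pos.mpr ha)]
    _ = a⁻¹ • ∫ x in Iic (a * t + b), g x := by
        rw [integral_add_right_eq_self (fun y => (Iic (a * t + b)).indicator g y) b,
          integral_indicator measurableSet_Iic]

/-- The density of `N(m, σ²)`, parametrised by the standard deviation (unlike `gaussianPDFReal`). -/
noncomputable def gaussianDensity (σ m z : ℝ) : ℝ :=
  (σ * √(2 * π))⁻¹ * exp (-(z - m) ^ 2 / (2 * σ ^ 2))

theorem integrable_gaussianDensity {σ : ℝ} (hσ : σ ≠ 0) (m : ℝ) :
    Integrable (gaussianDensity σ m) := by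
  have h := (integrable_exp_neg_mul_sq (b := 1 / (2 * σ ^ 2)) (by positivity)).const_mul
    (σ * √(2 * π))⁻¹ |>.comp_sub_right m
  refine h.congr (ae_of_all _ fun z => ?_)
  simp only [gaussianDensity]
  congr 2
  ring

theorem setIntegral_Iic_gaussianDensity {σ : ℝ} (hσ : 0 < σ) (m c : ℝ) :
    ∫ z in Iic c, gaussianDensity σ m z = stdNormalCDF ((c - m) / σ) := by
  have hc : c = σ * ((c - m) / σ) + m := by field_simp; ring
  have hrescale : ∀ r,
      gaussianDensity σ m (σ * r + m) = σ⁻¹ * ((√(2 * π))⁻¹ * exp (-r ^ 2 / 2)) := by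
    intro r
    simp only [gaussianDensity, add_sub_cancel_right, mul_inv]
    field_simp
  have := integral_comp_mul_add_Iic (gaussianDensity σ m) ((c - m) / σ) hσ m
  rw [← hc, smul_eq_mul] at this
  rw [← mul_right_inj' (inv_pos.mpr hσ).ne', ← this, stdNormalCDF,
    ← integral_const_mul, ← integral_const_mul]
  simp_rw [hrescale]

theorem exp_mul_gaussianDensity_le_iff {σ m₀ m₁ : ℝ} (hσ : 0 < σ) (hm : m₀ < m₁) (ε z : ℝ) :
    exp ε * gaussianDensity σ m₁ z ≤ gaussianDensity σ m₀ z ↔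
      z ≤ (m₀ + m₁) / 2 - σ ^ 2 * ε / (m₁ - m₀) := by
  have hlog : -(z - m₀) ^ 2 / (2 * σ ^ 2) - (ε + -(z - m₁) ^ 2 / (2 * σ ^ 2)) =
      (m₁ - m₀) / σ ^ 2 * ((m₀ + m₁) / 2 - σ ^ 2 * ε / (m₁ - m₀) - z) := by
    have : m₁ - m₀ ≠ 0 := (sub_pos.mpr hm).ne'
    field_simp
    ring
  rw [gaussianDensity, gaussianDensity, mul_left_comm, ← exp_add,
    mul_le_mul_iff_right₀ (by positivity), exp_le_exp, ← sub_nonneg, hlog,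
    mul_nonneg_iff_of_pos_left (by have := sub_pos.mpr hm; positivity), sub_nonneg]

theorem max_sub_zero_eq_indicator {α : Type*} {f g : α → ℝ} {s : Set α}
    (h : ∀ x, g x ≤ f x ↔ x ∈ s) (x : α) :
    max (f x - g x) 0 = s.indicator (f - g) x := by
  by_cases hx : x ∈ s
  · rw [indicator_of_mem hx, max_eq_left (sub_nonneg.mpr ((h x).mpr hx)), Pi.sub_apply]
  · rw [indicator_of_notMem hx, max_eq_right (sub_nonpos.mpr (not_le.mp (mt (h x).mp hx)).le)]

theorem integral_max_sub_exp_mul_gaussianDensity {σ m₀ m₁ : ℝ} (hσ : 0 < σ) (hm : m₀ < m₁)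
    (ε : ℝ) :
    ∫ z, max (gaussianDensity σ m₀ z - exp ε * gaussianDensity σ m₁ z) 0 =
      stdNormalCDF (((m₀ + m₁) / 2 - σ ^ 2 * ε / (m₁ - m₀) - m₀) / σ) -
        exp ε * stdNormalCDF (((m₀ + m₁) / 2 - σ ^ 2 * ε / (m₁ - m₀) - m₁) / σ) := by
  have hint₀ := integrable_gaussianDensity hσ.ne' m₀
  have hint₁ := (integrable_gaussianDensity hσ.ne' m₁).const_mul (exp ε)
  simp_rw [max_sub_zero_eq_indicator (f := gaussianDensity σ m₀)
    (g := fun z => exp ε * gaussianDensity σ m₁ z) (s := Iic _)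
    (exp_mul_gaussianDensity_le_iff hσ hm ε)]
  rw [integral_indicator measurableSet_Iic, Pi.sub_def,
    integral_sub hint₀.integrableOn hint₁.integrableOn, integral_const_mul,
    setIntegral_Iic_gaussianDensity hσ, setIntegral_Iic_gaussianDensity hσ]

theorem gaussian_privacy_profile_general (σ Δ : ℝ) (hσ : 0 < σ) (hΔ : 0 < Δ)
    (ε : ℝ) :
    ∫ z : ℝ, max ((σ * Real.sqrt (2 * π))⁻¹ * exp (-z ^ 2 / (2 * σ ^ 2))
        - exp ε * ((σ * Real.sqrt (2 * π))⁻¹ * exp (-(z - Δ) ^ 2 / (2 * σ ^ 2)))) 0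
      = stdNormalCDF ((Δ / σ) / 2 - ε / (Δ / σ))
        - exp ε * stdNormalCDF (-(Δ / σ) / 2 - ε / (Δ / σ)) := by
  have h := integral_max_sub_exp_mul_gaussianDensity hσ hΔ ε
  simp only [gaussianDensity, sub_zero, zero_add] at h
  rw [h]
  congr 3
  · field_simp
  · field_simp
    ring

/-- Privacy profile of the Gaussian mechanism:
`D_{e^ε}(N(0,σ²) ‖ N(Δ,σ²)) = Φ(θ/2 - ε/θ) - e^ε Φ(-θ/2 - ε/θ)` with `θ = Δ/σ`. -/
theorem gaussian_privacy_profile (σ Δ : ℝ) (hσ : 0 < σ) (hΔ : 0 < Δ)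
    (ε : ℝ) (hε : 0 ≤ ε) :
    ∫ z : ℝ, max ((σ * Real.sqrt (2 * π))⁻¹ * exp (-z ^ 2 / (2 * σ ^ 2))
        - exp ε * ((σ * Real.sqrt (2 * π))⁻¹ * exp (-(z - Δ) ^ 2 / (2 * σ ^ 2)))) 0
      = stdNormalCDF ((Δ / σ) / 2 - ε / (Δ / σ))
        - exp ε * stdNormalCDF (-(Δ / σ) / 2 - ε / (Δ / σ)) :=
  gaussian_privacy_profile_general σ Δ hσ hΔ ε
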